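/- arXiv:1605.09302 — 5 statements merged into one kernel-verified Lean document; each statement's English description precedes it below -/
import Mathlib

section
/- Let n ≥ 2 and 1 ≤ r < n be integers. The normalizer of G_{n,r,pcn} in Homeo(𝔠_{n,r}) equals H_{n,r,∼}: a homeomorphism h of 𝔠_{n,r} satisfies h⁻¹ G_{n,r,pcn} h = G_{n,r,pcn} if and only if h ∈ H_{n,r,∼}. -/
open Set

namespace HigmanAut

/-- The one-sided infinite sequence space `𝔠_n` on `n` letters. -/
abbrev Cn (n : ℕ) : Type := ℕ → Fin n

/-- The Cantor space `𝔠_{n,r} = Fin r × (ℕ → Fin n)` (with the product topology,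
`Fin r` and `Fin n` discrete). -/
abbrev CNR (n r : ℕ) : Type := Fin r × Cn n

/-- A word: a letter from `Fin r` together with a finite list over `Fin n`. -/
abbrev Word (n r : ℕ) : Type := Fin r × List (Fin n)

/-- Self-homeomorphisms of `𝔠_{n,r}`. -/
abbrev Homeo (n r : ℕ) : Type := CNR n r ≃ₜ CNR n r

/-- Append a finite list to a word: `ν⌢w`. -/
def wApp {n r : ℕ} (ν : Word n r) (w : List (Fin n)) : Word n r := (ν.1, ν.2 ++ w)

/-- The point `ν⌢x` of `𝔠_{n,r}` determined by a word `ν` followed by `x ∈ 𝔠_n`. -/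
def wCat {n r : ℕ} (ν : Word n r) (x : Cn n) : CNR n r :=
  (ν.1, fun i => if h : i < ν.2.length then ν.2.get ⟨i, h⟩ else x (i - ν.2.length))

/-- The cone `U_ν` of a word `ν`. -/
def cone {n r : ℕ} (ν : Word n r) : Set (CNR n r) :=
  {p | p.1 = ν.1 ∧ ∀ (i : ℕ) (h : i < ν.2.length), p.2 i = ν.2.get ⟨i, h⟩}

/-- Membership in the Higman--Thompson group `G_{n,r}`: `g` is a prefix code map,
i.e. there are `k ≥ 1` and words `ν i`, `η i` whose cones partition `𝔠_{n,r}`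
with `g(ν i ⌢ x) = η i ⌢ x` for all `i`, `x`. -/
def IsHigman {n r : ℕ} (g : Homeo n r) : Prop :=
  ∃ k : ℕ, 0 < k ∧ ∃ ν η : Fin k → Word n r,
    (∀ p : CNR n r, ∃! i : Fin k, p ∈ cone (ν i)) ∧
    (∀ p : CNR n r, ∃! i : Fin k, p ∈ cone (η i)) ∧
    (∀ (i : Fin k) (x : Cn n), g (wCat (ν i) x) = wCat (η i) x)

/-- The Higman--Thompson group `G_{n,r}` as a set of homeomorphisms. -/
def higmanSet (n r : ℕ) : Set (Homeo n r) := {g | IsHigman g}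

/-- Conjugation: in the paper's right-action notation this is `g ↦ h⁻¹ g h`
(as a left function, `x ↦ h (g (h⁻¹ x))`). -/
def conjH {n r : ℕ} (h g : Homeo n r) : Homeo n r := (h.symm.trans g).trans h

/-- `h` acts in the same fashion on `U_α` and `U_β`: there are words `α'`, `β'`
and a common local action `f` with `h(α⌢x) = α'⌢f(x)` and `h(β⌢x) = β'⌢f(x)`. -/
def SameFashion {n r : ℕ} (h : Homeo n r) (α β : Word n r) : Prop :=
  ∃ (α' β' : Word n r) (f : Cn n → Cn n),
    (∀ x : Cn n, h (wCat α x) = wCat α' (f x)) ∧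
    (∀ x : Cn n, h (wCat β x) = wCat β' (f x))

/-- Tail equivalence on `𝔠_{n,r}`. -/
def TailEq {n r : ℕ} (x y : CNR n r) : Prop :=
  ∃ (ν η : Word n r) (z : Cn n), x = wCat ν z ∧ y = wCat η z

/-- `h` is pointwise canonical. -/
def PtwiseCanonical {n r : ℕ} (h : Homeo n r) : Prop :=
  ∀ x : CNR n r, ∃ (η₁ η₂ : Word n r) (y : Cn n), x = wCat η₁ y ∧ h x = wCat η₂ y

/-- `h` is densely canonical. -/
def DenselyCanonical {n r : ℕ} (h : Homeo n r) : Prop :=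
  ∀ U : Set (CNR n r), IsOpen U → U.Nonempty →
    ∃ η ζ : Word n r, cone η ⊆ U ∧ ∀ x : Cn n, h (wCat η x) = wCat ζ x

/-- `h` belongs to `H_{n,r,∼}`: `x ∼ y` iff `h(x) ∼ h(y)`. -/
def PreservesTailEq {n r : ℕ} (h : Homeo n r) : Prop :=
  ∀ x y : CNR n r, TailEq x y ↔ TailEq (h x) (h y)

/-- `ν` is a prefix of `η`, i.e. `U_η ⊆ U_ν`. -/
def WPrefix {n r : ℕ} (ν η : Word n r) : Prop := cone η ⊆ cone ν

/-- Two words are incomparable if neither is a prefix of the other. -/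
def Incomp {n r : ℕ} (ν η : Word n r) : Prop := ¬ WPrefix ν η ∧ ¬ WPrefix η ν

section AuxLemmas

open Classical in
noncomputable def swapFun {n r : ℕ} (α β : Word n r) (p : CNR n r) : CNR n r :=
  if p ∈ cone α then wCat β (fun i => p.2 (i + α.2.length))
  else if p ∈ cone β then wCat α (fun i => p.2 (i + β.2.length))
  else p

variable {n r : ℕ}

lemma wCat_nil (c : Fin r) (z : Cn n) : wCat (n := n) (c, ([] : List (Fin n))) z = (c, z) := by
  unfold wCat; simp

lemma tailEq_refl (x : CNR n r) : TailEq x x :=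
  ⟨(x.1, []), (x.1, []), x.2, by rw [wCat_nil], by rw [wCat_nil]⟩

lemma ptwise_iff (g : Homeo n r) : PtwiseCanonical g ↔ ∀ p, TailEq p (g p) := Iff.rfl

lemma snd_wCat_of_lt {ν : Word n r} {w : Cn n} {i : ℕ} (h : i < ν.2.length) :
    (wCat ν w).2 i = ν.2.get ⟨i, h⟩ := dif_pos h

lemma snd_wCat_of_ge {ν : Word n r} {w : Cn n} {i : ℕ} (h : ¬ i < ν.2.length) :
    (wCat ν w).2 i = w (i - ν.2.length) := dif_neg h

lemma wCat_mem_cone (ν : Word n r) (w : Cn n) : wCat ν w ∈ cone ν :=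
  ⟨rfl, fun _ h => dif_pos h⟩

lemma eq_wCat_of_mem_cone {ν : Word n r} {p : CNR n r} (hp : p ∈ cone ν) :
    p = wCat ν (fun i => p.2 (i + ν.2.length)) := by
  obtain ⟨h1, h2⟩ := hp
  refine Prod.ext h1 (funext fun i => ?_)
  by_cases h : i < ν.2.length
  · rw [snd_wCat_of_lt h]; exact h2 i h
  · rw [snd_wCat_of_ge h]
    show p.2 i = p.2 (i - ν.2.length + ν.2.length)
    rw [Nat.sub_add_cancel (by omega)]

lemma shift_wCat (ν : Word n r) (w : Cn n) :
    (fun i => (wCat ν w).2 (i + ν.2.length)) = w := by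
  funext i
  rw [snd_wCat_of_ge (by omega)]
  congr 1; omega

lemma isClopen_cone (ν : Word n r) : IsClopen (cone ν) := by
  have : cone ν = (Prod.fst ⁻¹' {ν.1}) ∩
      ⋂ i : Fin ν.2.length, (fun p : CNR n r => p.2 i) ⁻¹' {ν.2.get i} := by
    ext p
    simp only [cone, mem_setOf_eq, mem_inter_iff, mem_preimage, mem_singleton_iff, mem_iInter]
    constructor
    · rintro ⟨h1, h2⟩; exact ⟨h1, fun i => h2 i i.2⟩
    · rintro ⟨h1, h2⟩; exact ⟨h1, fun i h => h2 ⟨i, h⟩⟩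
  rw [this]
  exact IsClopen.inter ((isClopen_discrete _).preimage continuous_fst)
    (isClopen_iInter_of_finite fun i =>
      (isClopen_discrete _).preimage ((continuous_apply _).comp continuous_snd))

lemma continuous_wCat_shift (β : Word n r) (L : ℕ) :
    Continuous (fun p : CNR n r => wCat β (fun i => p.2 (i + L))) := by
  unfold wCat
  apply Continuous.prodMk continuous_const
  apply continuous_pi
  intro i
  by_cases h : i < β.2.length
  · simp only [dif_pos h]; exact continuous_const
  · simp only [dif_neg h]; exact (continuous_apply _).comp continuous_snd

lemma frontier_cone_empty (ν : Word n r) : frontier {x : CNR n r | x ∈ cone ν} = ∅ :=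
  (isClopen_cone ν).frontier_eq

lemma continuous_swapFun (α β : Word n r) : Continuous (swapFun α β) := by
  unfold swapFun
  exact @Continuous.if _ _ _ _ _ _ _ (fun a => Classical.propDecidable _)
    (fun a ha => absurd (frontier_cone_empty α ▸ ha) (notMem_empty a))
    (continuous_wCat_shift _ _)
    (@Continuous.if _ _ _ _ _ _ _ (fun a => Classical.propDecidable _)
      (fun a ha => absurd (frontier_cone_empty β ▸ ha) (notMem_empty a))
      (continuous_wCat_shift _ _) continuous_id)

lemma swapFun_of_mem_left {α β : Word n r} (_hd : ∀ p, p ∈ cone α → p ∈ cone β → False)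
    (w : Cn n) : swapFun α β (wCat α w) = wCat β w := by
  unfold swapFun
  rw [if_pos (wCat_mem_cone α w), shift_wCat]

lemma swapFun_of_mem_right {α β : Word n r} (hd : ∀ p, p ∈ cone α → p ∈ cone β → False)
    (w : Cn n) : swapFun α β (wCat β w) = wCat α w := by
  unfold swapFun
  rw [if_neg (fun hmem => hd _ hmem (wCat_mem_cone β w)), if_pos (wCat_mem_cone β w), shift_wCat]

lemma swapFun_invol {α β : Word n r} (hd : ∀ p, p ∈ cone α → p ∈ cone β → False)
    (p : CNR n r) : swapFun α β (swapFun α β p) = p := by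
  by_cases hα : p ∈ cone α
  · have hp := eq_wCat_of_mem_cone hα
    rw [hp, swapFun_of_mem_left hd, swapFun_of_mem_right hd]
  · by_cases hβ : p ∈ cone β
    · have hp := eq_wCat_of_mem_cone hβ
      rw [hp, swapFun_of_mem_right hd, swapFun_of_mem_left hd]
    · unfold swapFun
      rw [if_neg hα, if_neg hβ, if_neg hα, if_neg hβ]

noncomputable def swapHomeo (α β : Word n r) (hd : ∀ p, p ∈ cone α → p ∈ cone β → False) :
    Homeo n r where
  toFun := swapFun α β
  invFun := swapFun α β
  left_inv := swapFun_invol hd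
  right_inv := swapFun_invol hd
  continuous_toFun := continuous_swapFun α β
  continuous_invFun := continuous_swapFun α β

lemma swapHomeo_pcn (α β : Word n r) (hd : ∀ p, p ∈ cone α → p ∈ cone β → False) :
    PtwiseCanonical (swapHomeo α β hd) := by
  intro p
  by_cases hα : p ∈ cone α
  · refine ⟨α, β, fun i => p.2 (i + α.2.length), eq_wCat_of_mem_cone hα, ?_⟩
    show swapFun α β p = _
    conv_lhs => rw [eq_wCat_of_mem_cone hα]
    exact swapFun_of_mem_left hd _
  · by_cases hβ : p ∈ cone β
    · refine ⟨β, α, fun i => p.2 (i + β.2.length), eq_wCat_of_mem_cone hβ, ?_⟩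
      show swapFun α β p = _
      conv_lhs => rw [eq_wCat_of_mem_cone hβ]
      exact swapFun_of_mem_right hd _
    · refine ⟨(p.1, []), (p.1, []), p.2, (wCat_nil _ _).symm, ?_⟩
      show swapFun α β p = _
      unfold swapFun
      rw [if_neg hα, if_neg hβ, wCat_nil]

/-- Extend a word by the first `m` letters of `z`. -/
def extW (ν : Word n r) (z : Cn n) (m : ℕ) : Word n r :=
  (ν.1, ν.2 ++ List.ofFn (fun i : Fin m => z i))

lemma extW_length (ν : Word n r) (z : Cn n) (m : ℕ) :
    (extW ν z m).2.length = ν.2.length + m := by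
  simp [extW]

lemma wCat_extW (ν : Word n r) (z : Cn n) (m : ℕ) :
    wCat ν z = wCat (extW ν z m) (fun i => z (i + m)) := by
  refine Prod.ext rfl (funext fun i => ?_)
  have hL : (extW ν z m).2.length = ν.2.length + m := extW_length ν z m
  by_cases h1 : i < ν.2.length
  · rw [snd_wCat_of_lt h1, snd_wCat_of_lt (show i < (extW ν z m).2.length by omega)]
    simp only [extW, List.get_eq_getElem]
    rw [List.getElem_append_left h1]
  · by_cases h2 : i < (extW ν z m).2.length
    · rw [snd_wCat_of_ge h1, snd_wCat_of_lt h2]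
      simp only [extW, List.get_eq_getElem]
      rw [List.getElem_append_right (by omega), List.getElem_ofFn]
    · rw [snd_wCat_of_ge h1, snd_wCat_of_ge h2]
      congr 1; omega

lemma exists_pcn_of_tailEq {x y : CNR n r} (hxy : TailEq x y) :
    ∃ g : Homeo n r, PtwiseCanonical g ∧ g x = y := by
  by_cases heq : x = y
  · refine ⟨Homeomorph.refl _, fun p => ⟨(p.1, []), (p.1, []), p.2, (wCat_nil _ _).symm, ?_⟩, heq⟩
    show p = wCat (p.1, []) p.2
    rw [wCat_nil]
  · obtain ⟨ν, η, z, hx, hy⟩ := hxy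
    -- choose m and prove disjointness of extended cones
    obtain ⟨m, hd⟩ : ∃ m, ∀ p, p ∈ cone (extW ν z m) → p ∈ cone (extW η z m) → False := by
      by_cases hc : ν.1 = η.1
      · have hsnd : x.2 ≠ y.2 := by
          intro h2
          apply heq
          refine Prod.ext ?_ h2
          rw [hx, hy]; exact hc
        obtain ⟨j, hj⟩ : ∃ j, x.2 j ≠ y.2 j := by
          by_contra hcon
          push_neg at hcon
          exact hsnd (funext hcon)
        refine ⟨j + 1, fun p hp1 hp2 => ?_⟩
        have hxm : x ∈ cone (extW ν z (j + 1)) := by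
          rw [hx, wCat_extW ν z (j + 1)]; exact wCat_mem_cone _ _
        have hym : y ∈ cone (extW η z (j + 1)) := by
          rw [hy, wCat_extW η z (j + 1)]; exact wCat_mem_cone _ _
        have hj1 : j < (extW ν z (j + 1)).2.length := by rw [extW_length]; omega
        have hj2 : j < (extW η z (j + 1)).2.length := by rw [extW_length]; omega
        have e1 : p.2 j = x.2 j := by rw [hp1.2 j hj1, hxm.2 j hj1]
        have e2 : p.2 j = y.2 j := by rw [hp2.2 j hj2, hym.2 j hj2]
        exact hj (by rw [← e1, ← e2])
      · exact ⟨0, fun p hp1 hp2 => hc (hp1.1 ▸ hp2.1 ▸ rfl)⟩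
    refine ⟨swapHomeo (extW ν z m) (extW η z m) hd, swapHomeo_pcn _ _ hd, ?_⟩
    rw [hx, hy, wCat_extW ν z m, wCat_extW η z m]
    exact swapFun_of_mem_left hd _

end AuxLemmas

/-- The normalizer of `G_{n,r,pcn}` in `Homeo(𝔠_{n,r})` equals
`H_{n,r,∼}`: `h⁻¹ G_{n,r,pcn} h = G_{n,r,pcn}` iff `h ∈ H_{n,r,∼}`. -/
theorem normalizer_pcn_eq_Hsim (n r : ℕ) (hn : 2 ≤ n) (hr1 : 1 ≤ r) (hrn : r < n)
    (h : Homeo n r) :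
    conjH h '' {g : Homeo n r | PtwiseCanonical g} = {g : Homeo n r | PtwiseCanonical g} ↔
      PreservesTailEq h := by
  constructor
  · intro himg
    intro x y
    constructor
    · intro hxy
      obtain ⟨g, hg, hgx⟩ := exists_pcn_of_tailEq hxy
      have hmem : conjH h g ∈ {g : Homeo n r | PtwiseCanonical g} := by
        rw [← himg]; exact ⟨g, hg, rfl⟩
      have h1 := hmem (h x)
      have h2 : conjH h g (h x) = h y := by
        simp only [conjH, Homeomorph.trans_apply, Homeomorph.symm_apply_apply, hgx]
      rw [h2] at h1
      exact h1
    · intro hxy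
      obtain ⟨g', hg', hgx⟩ := exists_pcn_of_tailEq hxy
      have hmem : g' ∈ conjH h '' {g : Homeo n r | PtwiseCanonical g} := by
        rw [himg]; exact hg'
      obtain ⟨g, hg, rfl⟩ := hmem
      have h2 : conjH h g (h x) = h (g x) := by
        simp only [conjH, Homeomorph.trans_apply, Homeomorph.symm_apply_apply]
      have hgxy : g x = y := h.injective (by rw [← h2, hgx])
      have h3 := hg x
      rw [hgxy] at h3
      exact h3
  · intro hpres
    ext g
    simp only [Set.mem_image, Set.mem_setOf_eq]
    constructor
    · rintro ⟨g₀, hg₀, rfl⟩ p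
      have h1 : TailEq (h.symm p) (g₀ (h.symm p)) := hg₀ (h.symm p)
      have h2 := (hpres (h.symm p) (g₀ (h.symm p))).mp h1
      rw [Homeomorph.apply_symm_apply] at h2
      have h3 : conjH h g₀ p = h (g₀ (h.symm p)) := by
        simp only [conjH, Homeomorph.trans_apply]
      rw [h3]
      exact h2
    · intro hg
      refine ⟨conjH h.symm g, ?_, ?_⟩
      · intro p
        have h1 : TailEq (h p) (g (h p)) := hg (h p)
        have h2 := (hpres p (h.symm (g (h p)))).mpr
          (by rw [Homeomorph.apply_symm_apply]; exact h1)
        have h3 : conjH h.symm g p = h.symm (g (h p)) := by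
          simp only [conjH, Homeomorph.trans_apply, Homeomorph.symm_symm]
        rw [h3]
        exact h2
      · ext p
        · simp [conjH]
        · simp [conjH]


end HigmanAut
end

section
/- Let n ≥ 2 and 1 ≤ r < n be integers, let g be a pointwise canonical homeomorphism of 𝔠_{n,r}, and let ν, η be words. Then the set A_{g,ν,η} := {x ∈ 𝔠_{n,r} | there exists y ∈ 𝔠_n with x = ν⌢y and g(x) = η⌢y} is a closed subset of 𝔠_{n,r}. -/
open Set

namespace HigmanAut

/-- For a pointwise canonical homeomorphism `g` and words `ν`, `η`,
the set `A_{g,ν,η} = {x | ∃ y, x = ν⌢y ∧ g(x) = η⌢y}` is closed. -/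
theorem pcn_matching_set_isClosed (n r : ℕ) (hn : 2 ≤ n) (hr1 : 1 ≤ r) (hrn : r < n)
    (g : Homeo n r) (hg : PtwiseCanonical g) (ν η : Word n r) :
    IsClosed {x : CNR n r | ∃ y : Cn n, x = wCat ν y ∧ g x = wCat η y} := by
  have hcat : ∀ (μ : Word n r), Continuous (fun u : Cn n => wCat μ u) := by
    intro μ
    refine continuous_prodMk.mpr ⟨continuous_const, continuous_pi fun i => ?_⟩
    by_cases h : i < μ.2.length
    · simpa only [wCat, dif_pos h] using (continuous_const : Continuous fun _ : Cn n => _)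
    · simpa only [wCat, dif_neg h] using continuous_apply (i - μ.2.length)
  have htl : Continuous (fun x : CNR n r => (fun i => x.2 (i + ν.2.length) : Cn n)) :=
    continuous_pi fun i => (continuous_apply (i + ν.2.length)).comp continuous_snd
  have key : {x : CNR n r | ∃ y : Cn n, x = wCat ν y ∧ g x = wCat η y} =
      {x : CNR n r | wCat ν (fun i => x.2 (i + ν.2.length)) = x} ∩
      {x : CNR n r | g x = wCat η (fun i => x.2 (i + ν.2.length))} := by
    ext x
    constructor
    · rintro ⟨y, rfl, h2⟩
      have hy : (fun i => (wCat ν y).2 (i + ν.2.length)) = y := by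
        funext i
        simp [wCat, Nat.not_lt.mpr (Nat.le_add_left _ _)]
      constructor
      · show wCat ν (fun i => (wCat ν y).2 (i + ν.2.length)) = wCat ν y
        rw [hy]
      · show g (wCat ν y) = wCat η (fun i => (wCat ν y).2 (i + ν.2.length))
        rw [hy]; exact h2
    · rintro ⟨h1, h2⟩
      exact ⟨_, h1.symm, h2⟩
  rw [key]
  exact (isClosed_eq ((hcat ν).comp htl) continuous_id).inter
    (isClosed_eq g.continuous ((hcat η).comp htl))

end HigmanAut
end

section
/- Let n ≥ 2 and 1 ≤ r < n be integers, let h be a homeomorphism of 𝔠_{n,r}, and let τ, η be words. Then for every word τ′ with U_{τ′} ⊆ h(U_τ) there exist a word η′ with U_{η′} ⊆ h(U_η) and a nonempty χ ∈ List (Fin n) such that h(U_{τ⌢χ}) ⊆ U_{τ′} and h(U_{η⌢χ}) ⊆ U_{η′}. -/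
open Set

namespace HigmanAut

/-!
Cones of initial segments form a neighbourhood basis at every point and `h` is a homeomorphism.
First refine `τ` by `χ₀` until `h` maps its cone into `U_{τ'}`. Then pick a point `p` of
`U_{η⌢χ₀}`, a cone `U_{η'}` around `h p` inside the open set `h(U_η)`, and refine `η⌢χ₀` by a
nonempty `χ₁` until `h` maps its cone into `U_{η'}`; `χ = χ₀ ++ χ₁` works on both sides since
refining only shrinks cones.
-/

section Cones

variable {n r : ℕ}

def prefixWord (p : CNR n r) (L : ℕ) : Word n r := (p.1, List.ofFn fun i : Fin L => p.2 i)

lemma mem_cone_wCat (ν : Word n r) (z : Cn n) : wCat ν z ∈ cone ν :=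
  ⟨rfl, fun i h => by simp [wCat, h]⟩

lemma mem_cone_prefixWord {p q : CNR n r} {L : ℕ} :
    q ∈ cone (prefixWord p L) ↔ q.1 = p.1 ∧ ∀ i < L, q.2 i = p.2 i := by
  simp [cone, prefixWord]

lemma isOpen_cone (ν : Word n r) : IsOpen (cone ν) := by
  have : cone ν = Prod.fst ⁻¹' {ν.1} ∩
      ⋂ i : Fin ν.2.length, (fun p : CNR n r => p.2 i) ⁻¹' {ν.2.get i} := by
    ext p
    simp only [cone, mem_ofPred_eq, mem_inter_iff, mem_preimage, mem_singleton_iff, mem_iInter]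
    exact ⟨fun ⟨h1, h2⟩ => ⟨h1, fun i => h2 i i.2⟩, fun ⟨h1, h2⟩ => ⟨h1, fun i hi => h2 ⟨i, hi⟩⟩⟩
  rw [this]
  exact ((isOpen_discrete _).preimage continuous_fst).inter <| isOpen_iInter_of_finite fun i =>
    (isOpen_discrete _).preimage ((continuous_apply (i : ℕ)).comp continuous_snd)

lemma eventually_cone_prefixWord_subset {U : Set (CNR n r)} (hU : IsOpen U) {p : CNR n r}
    (hp : p ∈ U) : ∀ᶠ L in Filter.atTop, cone (prefixWord p L) ⊆ U := by
  obtain ⟨u, v, -, hv, hpu, hpv, huv⟩ := isOpen_prod_iff.mp hU p.1 p.2 hp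
  obtain ⟨I, t, hI, hsub⟩ := isOpen_pi_iff.mp hv p.2 hpv
  filter_upwards [Filter.eventually_gt_atTop (I.sup id)] with L hL q hq
  obtain ⟨hq1, hq2⟩ := mem_cone_prefixWord.mp hq
  refine huv ⟨hq1 ▸ hpu, hsub fun i hi => ?_⟩
  rw [hq2 i ((Finset.le_sup (f := id) hi).trans_lt hL)]
  exact (hI i hi).2

lemma exists_mem_cone_subset {U : Set (CNR n r)} (hU : IsOpen U) {p : CNR n r} (hp : p ∈ U) :
    ∃ ν : Word n r, p ∈ cone ν ∧ cone ν ⊆ U := by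
  obtain ⟨L, hL⟩ := (eventually_cone_prefixWord_subset hU hp).exists
  exact ⟨prefixWord p L, mem_cone_prefixWord.mpr ⟨rfl, fun _ _ => rfl⟩, hL⟩

lemma prefixWord_eq_wApp {ν : Word n r} {p : CNR n r} (hp : p ∈ cone ν) {L : ℕ}
    (hL : ν.2.length ≤ L) :
    prefixWord p L = wApp ν (List.ofFn fun j : Fin (L - ν.2.length) => p.2 (ν.2.length + j)) := by
  refine Prod.ext hp.1 (List.ext_getElem (by simp [prefixWord, wApp]; omega) fun i hi _ => ?_)
  simp only [prefixWord, wApp, List.getElem_ofFn]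
  by_cases hi' : i < ν.2.length
  · rw [List.getElem_append_left hi']
    exact hp.2 i hi'
  · rw [List.getElem_append_right (by omega), List.getElem_ofFn, Fin.val_mk,
       Nat.add_sub_cancel' (not_lt.mp hi')]

lemma exists_mem_cone_wApp_subset {ν : Word n r} {p : CNR n r} (hp : p ∈ cone ν)
    {U : Set (CNR n r)} (hU : IsOpen U) (hpU : p ∈ U) :
    ∃ χ : List (Fin n), χ ≠ [] ∧ p ∈ cone (wApp ν χ) ∧ cone (wApp ν χ) ⊆ U := by
  obtain ⟨L, hLU, hLν⟩ := ((eventually_cone_prefixWord_subset hU hpU).and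
    (Filter.eventually_gt_atTop ν.2.length)).exists
  rw [prefixWord_eq_wApp hp hLν.le] at hLU
  refine ⟨_, ?_, ?_, hLU⟩
  · simp only [ne_eq, List.ofFn_eq_nil_iff]
    omega
  · rw [← prefixWord_eq_wApp hp hLν.le]
    exact mem_cone_prefixWord.mpr ⟨rfl, fun _ _ => rfl⟩

lemma cone_wApp_subset (ν : Word n r) (χ : List (Fin n)) : cone (wApp ν χ) ⊆ cone ν := by
  rintro p ⟨h1, h2⟩
  refine ⟨h1, fun i hi => ?_⟩
  rw [h2 i (by simp [wApp]; omega)]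
  exact List.getElem_append_left hi

lemma wApp_wApp (ν : Word n r) (a b : List (Fin n)) : wApp (wApp ν a) b = wApp ν (a ++ b) := by
  simp [wApp]

end Cones

theorem common_refining_suffix_general (n r : ℕ) (hn : 2 ≤ n)
    (h : Homeo n r) (τ η τ' : Word n r) (hτ' : cone τ' ⊆ ⇑h '' cone τ) :
    ∃ (η' : Word n r) (χ : List (Fin n)), χ ≠ [] ∧
      cone η' ⊆ ⇑h '' cone η ∧
      ⇑h '' cone (wApp τ χ) ⊆ cone τ' ∧
      ⇑h '' cone (wApp η χ) ⊆ cone η' := by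
  let z : Cn n := fun _ => ⟨0, by omega⟩
  obtain ⟨q, hqτ, hq⟩ := hτ' (mem_cone_wCat τ' z)
  obtain ⟨χ₀, -, -, hχ₀⟩ := exists_mem_cone_wApp_subset hqτ
    ((isOpen_cone τ').preimage h.continuous) (show h q ∈ cone τ' from hq ▸ mem_cone_wCat τ' z)
  have hp : wCat (wApp η χ₀) z ∈ cone (wApp η χ₀) := mem_cone_wCat _ _
  obtain ⟨η', hpη', hη'⟩ := exists_mem_cone_subset (h.isOpenMap _ (isOpen_cone η))
    (mem_image_of_mem h (cone_wApp_subset η χ₀ hp))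
  obtain ⟨χ₁, hχ₁, -, hχ₁η'⟩ := exists_mem_cone_wApp_subset hp
    ((isOpen_cone η').preimage h.continuous) hpη'
  refine ⟨η', χ₀ ++ χ₁, by simp [hχ₁], hη', ?_, ?_⟩
  · rw [← wApp_wApp, image_subset_iff]
    exact (cone_wApp_subset _ _).trans hχ₀
  · rw [← wApp_wApp, image_subset_iff]
    exact hχ₁η'

/-- For every cone `U_{τ'} ⊆ h(U_τ)` there are a cone
`U_{η'} ⊆ h(U_η)` and a nonempty `χ` with `h(U_{τ⌢χ}) ⊆ U_{τ'}` and
`h(U_{η⌢χ}) ⊆ U_{η'}`. -/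
theorem common_refining_suffix (n r : ℕ) (hn : 2 ≤ n) (hr1 : 1 ≤ r) (hrn : r < n)
    (h : Homeo n r) (τ η τ' : Word n r) (hτ' : cone τ' ⊆ ⇑h '' cone τ) :
    ∃ (η' : Word n r) (χ : List (Fin n)), χ ≠ [] ∧
      cone η' ⊆ ⇑h '' cone η ∧
      ⇑h '' cone (wApp τ χ) ⊆ cone τ' ∧
      ⇑h '' cone (wApp η χ) ⊆ cone η' :=
  common_refining_suffix_general n r hn h τ η τ' hτ'

end HigmanAut
end

section
/- Let n ≥ 2 and 1 ≤ r < n be integers, let h be a homeomorphism of 𝔠_{n,r}, and let τ, η be words such that for every χ ∈ List (Fin n) (including the empty list) h does NOT act in the same fashion on U_{τ⌢χ} and U_{η⌢χ}. Then h does not preserve tail equivalence: there exist x, y ∈ 𝔠_{n,r} with x ∼ y but ¬(h(x) ∼ h(y)). -/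
/-!
Suppose `h` preserved tail equivalence. Then for every `z ∈ 𝔠_n` the images `h(τ⌢z)` and
`h(η⌢z)` are tail equivalent, i.e. `z` lies in one of the countably many sets
`F_{α,β} = {z | ∃ w, h(τ⌢z) = α⌢w ∧ h(η⌢z) = β⌢w}`. These sets are closed, being preimages
of compact sets of pairs, so by the Baire category theorem one of them contains a cylinder
`{χ⌢x | x ∈ 𝔠_n}`. On that cylinder `h` maps `τ⌢χ⌢x` to `α⌢w` and `η⌢χ⌢x` to `β⌢w` with the
same `w`, i.e. `h` acts in the same fashion on `U_{τ⌢χ}` and `U_{η⌢χ}`.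
-/

open Set

namespace HigmanAut

open Stream'

section Sequences

variable {α : Type*} [TopologicalSpace α]

theorem continuous_appendStream (l : List α) :
    Continuous (Y := ℕ → α) fun x : ℕ → α => l ++ₛ x := by
  induction l with
  | nil => exact continuous_id
  | cons a l ih =>
    refine continuous_pi fun i => ?_
    cases i with
    | zero => exact continuous_const
    | succ i => exact (continuous_apply i).comp ih

variable [DiscreteTopology α]

theorem exists_forall_appendStream_mem_of_isOpen {U : Set (ℕ → α)} (hU : IsOpen U)
    (hne : U.Nonempty) : ∃ l : List α, ∀ x, l ++ₛ x ∈ U := by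
  obtain ⟨z, hz⟩ := hne
  obtain ⟨_, ⟨y, k, rfl⟩, -, hsub⟩ :=
    (PiNat.isTopologicalBasis_cylinders fun _ => α).exists_subset_of_mem_open hz hU
  refine ⟨take k y, fun x => hsub fun i hi => ?_⟩
  have hi' : i < (take k y).length := hi.trans_eq (Stream'.length_take k y).symm
  exact (get_append_left i _ x hi').trans (take_get i k _ hi')

theorem exists_forall_appendStream_mem_of_iUnion_isClosed [Nonempty α] {ι : Type*} [Countable ι]
    {F : ι → Set (ℕ → α)} (hF : ∀ i, IsClosed (F i)) (hcover : ⋃ i, F i = univ) :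
    ∃ i, ∃ l : List α, ∀ x, l ++ₛ x ∈ F i := by
  obtain ⟨i, hi⟩ := nonempty_interior_of_iUnion_of_closed hF hcover
  obtain ⟨l, hl⟩ :=
    exists_forall_appendStream_mem_of_isOpen (U := interior (F i)) isOpen_interior hi
  exact ⟨i, l, fun x => interior_subset (s := F i) (hl x)⟩

end Sequences

variable {n r : ℕ}

theorem wCat_eq (ν : Word n r) (x : Cn n) : wCat ν x = (ν.1, ν.2 ++ₛ x) := by
  refine Prod.ext rfl (funext fun i => ?_)
  by_cases hi : i < ν.2.length
  · simp only [wCat, dif_pos hi]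
    exact (get_append_left i ν.2 x hi).symm
  · obtain ⟨j, rfl⟩ := Nat.exists_eq_add_of_le (not_lt.1 hi)
    simp only [wCat, dif_neg hi, Nat.add_sub_cancel_left]
    exact (get_append_right j ν.2 x).symm

theorem wCat_wApp (ν : Word n r) (χ : List (Fin n)) (x : Cn n) :
    wCat (wApp ν χ) x = wCat ν (χ ++ₛ x) := by
  calc wCat (wApp ν χ) x = ((ν.1, ν.2 ++ χ ++ₛ x) : CNR n r) := wCat_eq _ x
    _ = ((ν.1, ν.2 ++ₛ (χ ++ₛ x)) : CNR n r) :=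
      congrArg (Prod.mk ν.1) (append_append_stream _ _ _)
    _ = wCat ν (χ ++ₛ x) := (wCat_eq ν _).symm

theorem continuous_wCat (ν : Word n r) : Continuous (wCat ν) := by
  have heq : wCat ν = fun x => ((ν.1, ν.2 ++ₛ x) : CNR n r) := funext (wCat_eq ν)
  rw [heq]
  exact continuous_const.prodMk (continuous_appendStream ν.2)

def commonTailPairs (α β : Word n r) : Set (CNR n r × CNR n r) :=
  range fun w => (wCat α w, wCat β w)

theorem isClosed_commonTailPairs (α β : Word n r) : IsClosed (commonTailPairs α β) :=
  (isCompact_range ((continuous_wCat α).prodMk (continuous_wCat β))).isClosed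

theorem exists_mem_commonTailPairs_of_tailEq {x y : CNR n r} (hxy : TailEq x y) :
    ∃ q : Word n r × Word n r, (x, y) ∈ commonTailPairs q.1 q.2 := by
  obtain ⟨α, β, w, rfl, rfl⟩ := hxy
  exact ⟨(α, β), w, rfl⟩

theorem sameFashion_wApp_of_forall_mem_commonTailPairs {h : Homeo n r} {τ η α β : Word n r}
    {χ : List (Fin n)}
    (hχ : ∀ x, (h (wCat τ (χ ++ₛ x)), h (wCat η (χ ++ₛ x))) ∈ commonTailPairs α β) :
    SameFashion h (wApp τ χ) (wApp η χ) := by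
  choose f hf using hχ
  refine ⟨α, β, f, fun x => ?_, fun x => ?_⟩
  · rw [wCat_wApp]; exact (congrArg Prod.fst (hf x)).symm
  · rw [wCat_wApp]; exact (congrArg Prod.snd (hf x)).symm

theorem exists_sameFashion_wApp_of_forall_tailEq (h : Homeo n r) (τ η : Word n r)
    (hTE : ∀ z : Cn n, TailEq (h (wCat τ z)) (h (wCat η z))) :
    ∃ χ : List (Fin n), SameFashion h (wApp τ χ) (wApp η χ) := by
  rcases isEmpty_or_nonempty (Fin n) with _ | _
  · exact ⟨[], τ, η, id, fun x => isEmptyElim (x 0), fun x => isEmptyElim (x 0)⟩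
  let Φ : Cn n → CNR n r × CNR n r := fun z => (h (wCat τ z), h (wCat η z))
  have hΦ : Continuous Φ :=
    (h.continuous.comp (continuous_wCat τ)).prodMk (h.continuous.comp (continuous_wCat η))
  obtain ⟨q, χ, hχ⟩ := exists_forall_appendStream_mem_of_iUnion_isClosed
    (F := fun q : Word n r × Word n r => Φ ⁻¹' commonTailPairs q.1 q.2)
    (fun q => (isClosed_commonTailPairs q.1 q.2).preimage hΦ)
    (eq_univ_of_forall fun z => mem_iUnion.2 (exists_mem_commonTailPairs_of_tailEq (hTE z)))
  exact ⟨χ, sameFashion_wApp_of_forall_mem_commonTailPairs hχ⟩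

theorem not_same_fashion_everywhere_not_preserve_tailEq_general (n r : ℕ)
    (h : Homeo n r) (τ η : Word n r)
    (hne : ∀ χ : List (Fin n), ¬ SameFashion h (wApp τ χ) (wApp η χ)) :
    ∃ x y : CNR n r, TailEq x y ∧ ¬ TailEq (h x) (h y) := by
  by_contra! hpres
  obtain ⟨χ, hχ⟩ := exists_sameFashion_wApp_of_forall_tailEq h τ η fun z =>
    hpres _ _ ⟨τ, η, z, rfl, rfl⟩
  exact hne χ hχ

/-- If `h` never acts in the same fashion on `U_{τ⌢χ}` and
`U_{η⌢χ}` (for any `χ`, including the empty list), then `h` does not preserve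
tail equivalence. -/
theorem not_same_fashion_everywhere_not_preserve_tailEq (n r : ℕ) (hn : 2 ≤ n)
    (hr1 : 1 ≤ r) (hrn : r < n) (h : Homeo n r) (τ η : Word n r)
    (hne : ∀ χ : List (Fin n), ¬ SameFashion h (wApp τ χ) (wApp η χ)) :
    ∃ x y : CNR n r, TailEq x y ∧ ¬ TailEq (h x) (h y) :=
  not_same_fashion_everywhere_not_preserve_tailEq_general n r h τ η hne

end HigmanAut
end

section
/- Let n ≥ 2 and 1 ≤ r < n be integers and let σ be a permutation of Fin n. The σ-twist σ̂ : 𝔠_{n,r} → 𝔠_{n,r}, (c, x) ↦ (c, σ ∘ x), is a homeomorphism of 𝔠_{n,r} satisfying σ̂⁻¹ G_{n,r} σ̂ = G_{n,r}, so that g ↦ σ̂⁻¹ ∘ g ∘ σ̂ is an automorphism of G_{n,r}; moreover this automorphism is an inner automorphism of G_{n,r} if and only if σ is the identity permutation. -/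
/-!
Conjugating a prefix-replacement map `ν i ⌢ x ↦ η i ⌢ x` by the twist `σ̂` gives the
prefix-replacement map of the letterwise twisted words, so `σ̂` normalizes `G_{n,r}`.
If conjugation by `σ̂` agreed on `G_{n,r}` with conjugation by some `g₀ ∈ G_{n,r}`, then
`σ̂⁻¹ ∘ g₀` would commute with `G_{n,r}`. For `p ≠ q`, permuting two cones of a fine enough
level gives an element of `G_{n,r}` fixing `p` and moving `q`, so the centralizer is trivial
and `σ̂ = g₀ ∈ G_{n,r}`. But an element of `G_{n,r}` keeps the tail `a a a ⋯` of a point,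
whereas `σ̂` turns it into `σ a σ a σ a ⋯`; hence `σ = 1`.
-/

open Set

namespace HigmanAut

variable {n r : ℕ}

lemma conjH_apply (h g : Homeo n r) (p : CNR n r) : conjH h g p = h (g (h.symm p)) := rfl

@[simp]
lemma conjH_refl (g : Homeo n r) : conjH (Homeomorph.refl _) g = g := rfl

lemma conjH_trans (h k g : Homeo n r) : conjH (h.trans k) g = conjH k (conjH h g) := rfl

lemma commute_of_conjH_eq {h k g : Homeo n r} (hkg : conjH h g = conjH k g) :
    Function.Commute g (k.trans h.symm) := fun p => by
  simpa [conjH_apply] using congrArg (fun f : Homeo n r => h.symm (f (k p))) hkg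

lemma wCat_snd_of_length_le (ν : Word n r) (x : Cn n) {i : ℕ} (hi : ν.2.length ≤ i) :
    (wCat ν x).2 i = x (i - ν.2.length) := by
  simp [wCat, Nat.not_lt.2 hi]

lemma isHigman_refl (hr : 0 < r) : IsHigman (Homeomorph.refl (CNR n r)) := by
  have hpart : ∀ p : CNR n r, ∃! c : Fin r, p ∈ cone ((c, []) : Word n r) := fun p =>
    ⟨p.1, ⟨rfl, by simp⟩, fun c hc => hc.1.symm⟩
  exact ⟨r, hr, fun c => (c, []), fun c => (c, []), hpart, hpart, fun _ _ => rfl⟩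

section Twist

def twist (σ : Equiv.Perm (Fin n)) : Homeo n r :=
  (Homeomorph.refl _).prodCongr (Homeomorph.piCongrRight fun _ => σ.toHomeomorphOfDiscrete)

lemma twist_apply (σ : Equiv.Perm (Fin n)) (p : CNR n r) :
    twist σ p = (p.1, fun i => σ (p.2 i)) := rfl

lemma twist_symm_apply (σ : Equiv.Perm (Fin n)) (p : CNR n r) :
    (twist σ).symm p = (p.1, fun i => σ.symm (p.2 i)) := rfl

@[simp]
lemma twist_one : twist (1 : Equiv.Perm (Fin n)) = Homeomorph.refl (CNR n r) := rfl

lemma twist_mul (σ τ : Equiv.Perm (Fin n)) :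
    twist (σ * τ) = ((twist τ).trans (twist σ) : Homeo n r) := rfl

def mapWord (σ : Equiv.Perm (Fin n)) (ν : Word n r) : Word n r := (ν.1, ν.2.map σ)

lemma twist_wCat (σ : Equiv.Perm (Fin n)) (ν : Word n r) (x : Cn n) :
    twist σ (wCat ν x) = wCat (mapWord σ ν) (fun i => σ (x i)) := by
  ext i
  · rfl
  · simp only [twist_apply, wCat, mapWord, List.length_map]
    split_ifs <;> simp

lemma twist_symm_mem_cone_iff (σ : Equiv.Perm (Fin n)) (ν : Word n r) (p : CNR n r) :
    (twist σ).symm p ∈ cone ν ↔ p ∈ cone (mapWord σ ν) := by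
  simp [cone, mapWord, twist_symm_apply, Equiv.symm_apply_eq]

lemma IsHigman.conjH_twist {g : Homeo n r} (hg : IsHigman g) (σ : Equiv.Perm (Fin n)) :
    IsHigman (conjH (twist σ) g) := by
  obtain ⟨k, hk, ν, η, hν, hη, hgν⟩ := hg
  have hpart : ∀ ξ : Fin k → Word n r, (∀ p, ∃! i, p ∈ cone (ξ i)) →
      ∀ p, ∃! i, p ∈ cone (mapWord σ (ξ i)) := fun ξ hξ p => by
    simpa only [twist_symm_mem_cone_iff] using hξ ((twist σ).symm p)
  refine ⟨k, hk, mapWord σ ∘ ν, mapWord σ ∘ η, hpart ν hν, hpart η hη, fun i x => ?_⟩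
  have hx : (twist σ).symm (wCat (mapWord σ (ν i)) x) = wCat (ν i) (fun j => σ.symm (x j)) := by
    rw [Homeomorph.symm_apply_eq, twist_wCat]
    simp
  rw [Function.comp_apply, conjH_apply, hx, hgν, twist_wCat]
  simp

lemma conjH_twist_image_higmanSet (σ : Equiv.Perm (Fin n)) :
    conjH (twist σ) '' higmanSet n r = higmanSet n r := by
  refine Subset.antisymm (image_subset_iff.2 fun g hg => IsHigman.conjH_twist hg σ) fun g hg => ?_
  refine ⟨conjH (twist σ⁻¹) g, IsHigman.conjH_twist hg σ⁻¹, ?_⟩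
  rw [← conjH_trans, ← twist_mul, mul_inv_cancel, twist_one, conjH_refl]

lemma eq_one_of_isHigman_twist {σ : Equiv.Perm (Fin n)} (hσ : IsHigman (twist σ : Homeo n r)) :
    σ = 1 := by
  obtain ⟨k, hk, ν, η, -, -, hνη⟩ := hσ
  refine Equiv.ext fun a => ?_
  set N := (ν ⟨0, hk⟩).2.length + (η ⟨0, hk⟩).2.length
  have := congrArg (fun q : CNR n r => q.2 N) (hνη ⟨0, hk⟩ fun _ => a)
  simpa [twist_wCat, wCat_snd_of_length_le, mapWord, N] using this

end Twist

section PrefixPermutation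

def truncate (m : ℕ) (p : CNR n r) : Fin r × (Fin m → Fin n) := (p.1, fun j => p.2 j)

lemma exists_truncate_ne {p q : CNR n r} (hpq : p ≠ q) : ∃ m, truncate m p ≠ truncate m q := by
  by_contra! h
  refine hpq (Prod.ext (congrArg Prod.fst (h 0) :) (funext fun i => ?_))
  exact congrFun (congrArg Prod.snd (h (i + 1))) (Fin.last i)

lemma init_truncate (m : ℕ) (p : CNR n r) :
    Prod.map id Fin.init (truncate (m + 1) p) = truncate m p := rfl

def ofFnWord {m : ℕ} (w : Fin r × (Fin m → Fin n)) : Word n r := (w.1, List.ofFn w.2)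

variable {m : ℕ}

lemma mem_cone_ofFnWord_iff (w : Fin r × (Fin m → Fin n)) (p : CNR n r) :
    p ∈ cone (ofFnWord w) ↔ truncate m p = w := by
  simp only [cone, ofFnWord, truncate, mem_ofPred_eq, List.length_ofFn, List.get_ofFn,
    Prod.ext_iff, funext_iff, Fin.forall_iff]
  rfl

lemma truncate_wCat (w : Fin r × (Fin m → Fin n)) (x : Cn n) :
    truncate m (wCat (ofFnWord w) x) = w :=
  (mem_cone_ofFnWord_iff w _).1 ⟨rfl, fun i hi => by simp [wCat, hi]⟩

lemma wCat_ofFnWord_truncate (p : CNR n r) :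
    wCat (ofFnWord (truncate m p)) (fun i => p.2 (i + m)) = p := by
  ext i
  · rfl
  · by_cases hi : i < m
    · simp [wCat, ofFnWord, truncate, hi]
    · simp [wCat, ofFnWord, hi, Nat.sub_add_cancel (Nat.not_lt.1 hi)]

def splitAt (m : ℕ) : CNR n r ≃ₜ (Fin r × (Fin m → Fin n)) × Cn n where
  toFun p := (truncate m p, fun i => p.2 (i + m))
  invFun w := wCat (ofFnWord w.1) w.2
  left_inv := wCat_ofFnWord_truncate
  right_inv w := Prod.ext (truncate_wCat w.1 w.2)
    (funext fun i => by simp [wCat_snd_of_length_le, ofFnWord])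
  continuous_toFun := by
    refine .prodMk (.prodMk continuous_fst (continuous_pi fun j => ?_)) (continuous_pi fun i => ?_)
      <;> fun_prop
  continuous_invFun := by
    refine .prodMk (by fun_prop : Continuous fun w : (Fin r × (Fin m → Fin n)) × Cn n => w.1.1)
      (continuous_pi fun i => ?_)
    by_cases hi : i < m
    · simp only [ofFnWord, List.length_ofFn, hi, dite_true, List.get_eq_getElem,
        List.getElem_ofFn]
      exact (continuous_of_discreteTopology
        (f := fun w : Fin r × (Fin m → Fin n) => w.2 ⟨i, hi⟩)).comp continuous_fst
    · simp only [ofFnWord, List.length_ofFn, hi, dite_false]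
      fun_prop

def prefixPerm (m : ℕ) (F : Equiv.Perm (Fin r × (Fin m → Fin n))) : Homeo n r :=
  (splitAt m).trans ((F.toHomeomorphOfDiscrete.prodCongr (Homeomorph.refl _)).trans
    (splitAt m).symm)

variable (F : Equiv.Perm (Fin r × (Fin m → Fin n)))

lemma prefixPerm_wCat (w : Fin r × (Fin m → Fin n)) (x : Cn n) :
    prefixPerm m F (wCat (ofFnWord w) x) = wCat (ofFnWord (F w)) x := by
  have : splitAt m (wCat (ofFnWord w) x) = (w, x) := (splitAt m).apply_symm_apply (w, x)
  simp [prefixPerm, this]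
  rfl

lemma truncate_prefixPerm (p : CNR n r) : truncate m (prefixPerm m F p) = F (truncate m p) := by
  rw [← wCat_ofFnWord_truncate p, prefixPerm_wCat, truncate_wCat, truncate_wCat]

lemma prefixPerm_apply_eq_self {p : CNR n r} (hp : F (truncate m p) = truncate m p) :
    prefixPerm m F p = p := by
  rw [← wCat_ofFnWord_truncate p, prefixPerm_wCat, hp]

lemma existsUnique_mem_cone_ofFnWord {k : ℕ} (e : Fin k ≃ Fin r × (Fin m → Fin n))
    (p : CNR n r) : ∃! i, p ∈ cone (ofFnWord (e i)) := by
  simp only [mem_cone_ofFnWord_iff, eq_comm (a := truncate m p), ← e.eq_symm_apply]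
  exact existsUnique_eq

lemma isHigman_prefixPerm (hr : 0 < r) (hn : 0 < n) : IsHigman (prefixPerm m F) := by
  have : Nonempty (Fin r × (Fin m → Fin n)) := ⟨(⟨0, hr⟩, fun _ => ⟨0, hn⟩)⟩
  let e := (Fintype.equivFin (Fin r × (Fin m → Fin n))).symm
  exact ⟨_, Fintype.card_pos, ofFnWord ∘ e, ofFnWord ∘ F ∘ e,
    existsUnique_mem_cone_ofFnWord e, existsUnique_mem_cone_ofFnWord (e.trans F),
    fun i x => prefixPerm_wCat F (e i) x⟩

end PrefixPermutation

lemma exists_isHigman_apply_eq_self_apply_ne (hn : 2 ≤ n) (hr : 0 < r) {p q : CNR n r}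
    (hpq : p ≠ q) : ∃ g : Homeo n r, IsHigman g ∧ g p = p ∧ g q ≠ q := by
  obtain ⟨m, hm⟩ := exists_truncate_ne hpq
  have : Nontrivial (Fin n) := Fin.nontrivial_iff_two_le.2 hn
  set u := truncate (m + 1) q
  -- Swap the level-`(m + 1)` cones of `u` and of `u'`, which differs from `u` only in its last
  -- letter; `p` lies in neither, as it already differs from `q` at level `m`.
  obtain ⟨b, hb⟩ := exists_ne (u.2 (Fin.last m))
  set u' : Fin r × (Fin (m + 1) → Fin n) := (u.1, Function.update u.2 (Fin.last m) b)
  have hu' : u' ≠ u := fun h => hb (by simpa [u'] using congrFun (congrArg Prod.snd h) (Fin.last m))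
  have hinit : Prod.map id Fin.init u' = truncate m q := by
    simp only [u', Prod.map, Fin.init_update_last]
    exact init_truncate m q
  have hp : truncate (m + 1) p ≠ u ∧ truncate (m + 1) p ≠ u' := by
    constructor <;> intro h <;> apply hm
    · rw [← init_truncate, h, init_truncate]
    · rw [← init_truncate, h, hinit]
  refine ⟨prefixPerm (m + 1) (Equiv.swap u u'), isHigman_prefixPerm _ hr (by omega),
    prefixPerm_apply_eq_self _ (Equiv.swap_apply_of_ne_of_ne hp.1 hp.2), fun h => hu' ?_⟩
  simpa [truncate_prefixPerm, u] using congrArg (truncate (m + 1)) h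

lemma eq_id_of_commute_isHigman (hn : 2 ≤ n) (hr : 0 < r) {H : CNR n r → CNR n r}
    (hH : ∀ g : Homeo n r, IsHigman g → Function.Commute g H) : H = id := by
  funext p
  show H p = p
  by_contra hne
  obtain ⟨g, hg, hgp, hgH⟩ := exists_isHigman_apply_eq_self_apply_ne hn hr (Ne.symm hne)
  exact hgH (by rw [hH g hg p, hgp])

theorem sigma_twist_automorphism_general (n r : ℕ) (hn : 2 ≤ n) (hr1 : 1 ≤ r)
    (σ : Equiv.Perm (Fin n)) :
    ∃ tw : Homeo n r,
      (∀ p : CNR n r, tw p = (p.1, fun i => σ (p.2 i))) ∧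
      conjH tw '' higmanSet n r = higmanSet n r ∧
      ((∃ g₀ : Homeo n r, IsHigman g₀ ∧
          ∀ g : Homeo n r, IsHigman g → conjH tw g = conjH g₀ g) ↔ σ = 1) := by
  refine ⟨twist σ, fun _ => rfl, conjH_twist_image_higmanSet σ, ⟨?_, ?_⟩⟩
  · rintro ⟨g₀, hg₀, hconj⟩
    have hcentral := eq_id_of_commute_isHigman hn hr1 fun g hg => commute_of_conjH_eq (hconj g hg)
    have : g₀ = twist σ := by
      ext p : 1
      simpa using congrArg (twist σ) (congrFun hcentral p)
    exact eq_one_of_isHigman_twist (this ▸ hg₀)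
  · rintro rfl
    exact ⟨Homeomorph.refl _, isHigman_refl hr1, fun g _ => by rw [twist_one]⟩

/-- The `σ`-twist is a homeomorphism of `𝔠_{n,r}` normalizing
`G_{n,r}`, and the induced automorphism `g ↦ σ̂⁻¹ g σ̂` of `G_{n,r}` is inner iff
`σ` is the identity permutation. -/
theorem sigma_twist_automorphism (n r : ℕ) (hn : 2 ≤ n) (hr1 : 1 ≤ r) (hrn : r < n)
    (σ : Equiv.Perm (Fin n)) :
    ∃ tw : Homeo n r,
      (∀ p : CNR n r, tw p = (p.1, fun i => σ (p.2 i))) ∧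
      conjH tw '' higmanSet n r = higmanSet n r ∧
      ((∃ g₀ : Homeo n r, IsHigman g₀ ∧
          ∀ g : Homeo n r, IsHigman g → conjH tw g = conjH g₀ g) ↔ σ = 1) :=
  sigma_twist_automorphism_general n r hn hr1 σ

end HigmanAut
end
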